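/- arXiv:2510.04070 — 8 statements merged into one kernel-verified Lean document; each statement's English description precedes it below -/
import Mathlib

section
/- Let $(X_n)_{n \in \mathbb{N}}$ be a family of measurable spaces and let $(\kappa_n)_{n \in \mathbb{N}}$ be a family of Markov kernels such that for each $n$, $\kappa_n$ is a kernel from $\prod_{i=0}^n X_i$ to $X_{n+1}$. Then there exists a unique Markov kernel $\xi$ from $X_0$ to $\prod_{i=1}^{\infty} X_i$ such that for every $n \ge 1$, the pushforward of $\xi$ under the projection onto the first $n$ coordinates equals the iterated composition-product $\kappa_0 \otimes_k \cdots \otimes_k \kappa_{n-1}$. (Ionescu-Tulcea theorem.) -/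
open MeasureTheory ProbabilityTheory

variable {X : ℕ → Type*} [∀ n, MeasurableSpace (X n)]

/-- The iterated composition-product `κ 0 ⊗ₖ κ 1 ⊗ₖ ⋯ ⊗ₖ κ (n - 1)` of a family of kernels
`κ n : (Π i ≤ n, X i) ↝ X (n + 1)`, as a kernel from `X 0` to `Π i : Fin n, X (i + 1)`,
i.e. a kernel from `X 0` to `∏_{i=1}^n X i`. -/
noncomputable def iteratedCompProd
    (κ : ∀ n, Kernel (Π i : Fin (n + 1), X i) (X (n + 1))) :
    ∀ n : ℕ, Kernel (X 0) (Π i : Fin n, X (i + 1))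
  | 0 => Kernel.deterministic (fun _ ↦ (fun i : Fin 0 ↦ i.elim0)) measurable_const
  | (n + 1) =>
      (iteratedCompProd κ n ⊗ₖ
          (κ n).comap
            (fun p : X 0 × (Π i : Fin n, X (i + 1)) ↦
              fun i : Fin (n + 1) ↦
                Fin.cases (motive := fun i : Fin (n + 1) ↦ X i) p.1 (fun j ↦ p.2 j) i)
            (by
              refine measurable_pi_lambda _ (fun i ↦ ?_)
              induction i using Fin.cases with
              | zero => exact measurable_fst
              | succ j => exact (measurable_pi_apply j).comp measurable_snd)).map
        (fun p : (Π i : Fin n, X (i + 1)) × X (n + 1) ↦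
          fun i : Fin (n + 1) ↦
            Fin.lastCases (motive := fun i : Fin (n + 1) ↦ X (i + 1)) p.2 (fun j ↦ p.1 j) i)

/-!
Mathlib's `Kernel.traj` is the Ionescu-Tulcea kernel for kernels with domain
`Π i : Iic n, X i`. Reindexing `κ` along `Iic n ≃ X 0 × Fin n`, one composition-product step at
a time shows that the marginal of `traj` on the first `n + 1` coordinates started at `x` is
`δ_x ⊗ iteratedCompProd κ n`. Dropping the initial coordinate gives existence; uniqueness holds
because a finite measure on `Π n, Y n` is determined by its marginals on initial segments.
-/

open Finset Filter Preorder

lemma MeasureTheory.Measure.ext_of_map_restrict_fin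
    {Y : ℕ → Type*} [∀ n, MeasurableSpace (Y n)]
    {μ ν : Measure (Π n, Y n)} [IsFiniteMeasure μ] [IsFiniteMeasure ν]
    (h : ∀ᶠ n in atTop,
      μ.map (fun f (i : Fin n) ↦ f i) = ν.map (fun f (i : Fin n) ↦ f i)) :
    μ = ν := by
  have hI : ∀ I : Finset ℕ, μ.map I.restrict = ν.map I.restrict := by
    intro I
    obtain ⟨n, hn, hIn⟩ := (h.and (eventually_gt_atTop (I.sup id))).exists
    have hrestrict : I.restrict = (fun (y : Π i : Fin n, Y i) (i : I) ↦
        y ⟨i, (le_sup (f := id) i.2).trans_lt hIn⟩) ∘ (fun f (i : Fin n) ↦ f i) := rfl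
    rw [hrestrict, ← Measure.map_map (by fun_prop) (by fun_prop),
      ← Measure.map_map (by fun_prop) (by fun_prop), hn]
  exact IsProjectiveLimit.unique (P := fun I ↦ ν.map I.restrict) hI fun _ ↦ rfl

namespace IonescuTulcea

def consZero (n : ℕ) (p : X 0 × (Π i : Fin n, X (i + 1))) : Π i : Fin (n + 1), X i :=
  fun i ↦ Fin.cases (motive := fun i : Fin (n + 1) ↦ X i) p.1 (fun j ↦ p.2 j) i

def appendLast (n : ℕ) (p : (Π i : Fin n, X (i + 1)) × X (n + 1)) :
    Π i : Fin (n + 1), X (i + 1) :=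
  fun i ↦ Fin.lastCases (motive := fun i : Fin (n + 1) ↦ X (i + 1)) p.2 (fun j ↦ p.1 j) i

def splitIic (n : ℕ) (y : Π i : Iic n, X i) : X 0 × Π i : Fin n, X (i + 1) :=
  (y ⟨0, mem_Iic.2 n.zero_le⟩, fun i ↦ y ⟨i + 1, mem_Iic.2 i.2⟩)

@[fun_prop]
lemma measurable_consZero (n : ℕ) : Measurable (consZero (X := X) n) := by
  refine measurable_pi_lambda _ fun i ↦ ?_
  cases i using Fin.cases with
  | zero => exact measurable_fst
  | succ j => exact (measurable_pi_apply j).comp measurable_snd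

@[fun_prop]
lemma measurable_appendLast (n : ℕ) : Measurable (appendLast (X := X) n) := by
  refine measurable_pi_lambda _ fun i ↦ ?_
  cases i using Fin.lastCases <;>
    simp only [appendLast, Fin.lastCases_last, Fin.lastCases_castSucc] <;> fun_prop

@[fun_prop]
lemma measurable_splitIic (n : ℕ) : Measurable (splitIic (X := X) n) := by
  unfold splitIic; fun_prop

variable (κ : ∀ n, Kernel (Π i : Fin (n + 1), X i) (X (n + 1)))

noncomputable def pairKernel (n : ℕ) : Kernel (X 0 × Π i : Fin n, X (i + 1)) (X (n + 1)) :=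
  (κ n).comap (consZero n) (measurable_consZero n)

lemma iteratedCompProd_succ (n : ℕ) :
    iteratedCompProd κ (n + 1) =
      (iteratedCompProd κ n ⊗ₖ pairKernel κ n).map (appendLast n) :=
  rfl

noncomputable def iicKernel (n : ℕ) : Kernel (Π i : Iic n, X i) (X (n + 1)) :=
  (pairKernel κ n).comap (splitIic n) (measurable_splitIic n)

noncomputable def stepKernel (n : ℕ) :
    Kernel (X 0 × Π i : Fin n, X (i + 1)) (X 0 × Π i : Fin (n + 1), X (i + 1)) :=
  (Kernel.id ×ₖ pairKernel κ n).map fun q ↦ (q.1.1, appendLast n (q.1.2, q.2))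

variable [∀ n, IsMarkovKernel (κ n)]

instance (n : ℕ) : IsMarkovKernel (pairKernel κ n) := by unfold pairKernel; infer_instance

instance (n : ℕ) : IsMarkovKernel (iicKernel κ n) := by unfold iicKernel; infer_instance

instance isMarkovKernel_iteratedCompProd : ∀ n, IsMarkovKernel (iteratedCompProd κ n)
  | 0 => by rw [iteratedCompProd]; infer_instance
  | n + 1 => by
      have := isMarkovKernel_iteratedCompProd n
      rw [iteratedCompProd_succ]
      exact Kernel.IsMarkovKernel.map _ (by fun_prop)

lemma splitIic_IicProdIoc (n : ℕ) (y : Π i : Iic n, X i) (z : X (n + 1)) :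
    splitIic (n + 1) (IicProdIoc n (n + 1) (y, MeasurableEquiv.piSingleton n z)) =
      ((splitIic n y).1, appendLast n ((splitIic n y).2, z)) := by
  refine Prod.ext (by simp [splitIic, IicProdIoc]) (funext fun i ↦ ?_)
  cases i using Fin.lastCases with
  | last => simp [splitIic, appendLast, IicProdIoc, MeasurableEquiv.piSingleton]
  | cast j => simp [splitIic, appendLast, IicProdIoc]

lemma partialTraj_succ_self_map_splitIic (n : ℕ) :
    (Kernel.partialTraj (iicKernel κ) n (n + 1)).map (splitIic (n + 1)) =
      (stepKernel κ n).comap (splitIic n) (measurable_splitIic n) := by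
  have hsingle := (MeasurableEquiv.piSingleton (X := X) n).measurable
  have hL : Kernel.id ×ₖ (iicKernel κ n).map (MeasurableEquiv.piSingleton n) =
      (Kernel.id ×ₖ iicKernel κ n).map (Prod.map id (MeasurableEquiv.piSingleton n)) := by
    rw [← Kernel.map_prod_map _ _ measurable_id hsingle, Kernel.map_id]
  have hR : Kernel.deterministic (splitIic n) (measurable_splitIic n) ×ₖ iicKernel κ n =
      (Kernel.id ×ₖ iicKernel κ n).map (Prod.map (splitIic n) id) := by
    rw [← Kernel.map_prod_eq _ _ (measurable_splitIic n), Kernel.id_map]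
  rw [Kernel.partialTraj_succ_self, stepKernel, Kernel.comap_map_comm _ _ (by fun_prop),
    Kernel.comap_prod, Kernel.id_comap, ← iicKernel, hL, hR,
    ← Kernel.map_comp_right _ (by fun_prop) (by fun_prop),
    ← Kernel.map_comp_right _ (by fun_prop) (by fun_prop),
    ← Kernel.map_comp_right _ (by fun_prop) (by fun_prop)]
  congr 1
  funext p
  exact splitIic_IicProdIoc n p.1 p.2

lemma id_prod_iteratedCompProd_succ (n : ℕ) :
    Kernel.id ×ₖ iteratedCompProd κ (n + 1) =
      stepKernel κ n ∘ₖ (Kernel.id ×ₖ iteratedCompProd κ n) := by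
  refine Kernel.ext_fun fun x f hf ↦ ?_
  rw [Kernel.lintegral_id_prod hf, iteratedCompProd_succ,
    Kernel.lintegral_map _ (by fun_prop) _ (by fun_prop),
    Kernel.lintegral_compProd _ _ _ (by fun_prop), Kernel.lintegral_comp _ _ _ hf,
    Kernel.lintegral_id_prod hf.lintegral_kernel]
  congr with y
  rw [stepKernel, Kernel.lintegral_map _ (by fun_prop) _ hf,
    Kernel.lintegral_id_prod (by fun_prop)]

lemma partialTraj_zero_map_splitIic (n : ℕ) :
    (Kernel.partialTraj (iicKernel κ) 0 n).map (splitIic n) =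
      (Kernel.id ×ₖ iteratedCompProd κ n).comap (fun y ↦ y ⟨0, mem_Iic.2 le_rfl⟩)
        (measurable_pi_apply _) := by
  induction n with
  | zero =>
    rw [Kernel.partialTraj_self, Kernel.id_map (measurable_splitIic 0), iteratedCompProd,
      Kernel.id, Kernel.deterministic_prod_deterministic]
    ext y : 1
    simp only [Kernel.deterministic_apply, Kernel.comap_apply]
    exact congrArg _ (Prod.ext rfl (funext fun i ↦ i.elim0))
  | succ n ih =>
    rw [Kernel.partialTraj_succ_eq_comp n.zero_le, Kernel.map_comp,
      partialTraj_succ_self_map_splitIic, ← Kernel.comp_map _ _ (measurable_splitIic n), ih,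
      id_prod_iteratedCompProd_succ]
    -- `η ∘ₖ κ.comap f = (η ∘ₖ κ).comap f` holds definitionally
    rfl

def iicZeroOf (x : X 0) : Π i : Iic 0, X i
  | ⟨0, _⟩ => x
  | ⟨_ + 1, h⟩ => absurd (mem_Iic.1 h) (Nat.not_succ_le_zero _)

@[fun_prop]
lemma measurable_iicZeroOf : Measurable (iicZeroOf (X := X)) := by
  refine measurable_pi_lambda _ fun ⟨i, hi⟩ ↦ ?_
  cases i with
  | zero => exact measurable_id
  | succ i => exact absurd (mem_Iic.1 hi) (Nat.not_succ_le_zero _)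

noncomputable def trajKernel : Kernel (X 0) (Π n, X (n + 1)) :=
  ((Kernel.traj (iicKernel κ) 0).comap iicZeroOf measurable_iicZeroOf).map fun f n ↦ f (n + 1)

instance : IsMarkovKernel (trajKernel κ) := by
  unfold trajKernel
  exact Kernel.IsMarkovKernel.map _ (by fun_prop)

lemma trajKernel_map_restrict (n : ℕ) :
    (trajKernel κ).map (fun f (i : Fin n) ↦ f i) = iteratedCompProd κ n := by
  have hrestrict : (fun f (i : Fin n) ↦ f i) ∘ (fun (f : Π n, X n) n ↦ f (n + 1)) =
      Prod.snd ∘ splitIic n ∘ frestrictLe n := rfl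
  rw [trajKernel, ← Kernel.map_comp_right _ (by fun_prop) (by fun_prop), hrestrict,
    ← Kernel.comap_map_comm _ _ (by fun_prop),
    Kernel.map_comp_right _ (by fun_prop) measurable_snd,
    Kernel.map_comp_right _ (measurable_frestrictLe n) (measurable_splitIic n),
    Kernel.traj_map_frestrictLe, partialTraj_zero_map_splitIic,
    ← Kernel.comap_map_comm _ _ measurable_snd, ← Kernel.comap_comp_right]
  change ((Kernel.id ×ₖ iteratedCompProd κ n).map Prod.snd).comap id measurable_id = _
  rw [Kernel.comap_id, ← Kernel.snd_eq, Kernel.snd_prod]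

end IonescuTulcea

/-- **The Ionescu-Tulcea theorem.** Given a family of Markov kernels
`κ n : (∏_{i=0}^n X i) ↝ X (n + 1)`, there exists a unique Markov kernel
`ξ : X 0 ↝ ∏_{i=1}^∞ X i` such that for every `n ≥ 1`, the pushforward of `ξ` by the projection
on the first `n` coordinates is the iterated composition-product `κ 0 ⊗ₖ ⋯ ⊗ₖ κ (n - 1)`. -/
theorem ionescuTulcea
    (κ : ∀ n, Kernel (Π i : Fin (n + 1), X i) (X (n + 1)))
    (hκ : ∀ n, IsMarkovKernel (κ n)) :
    ∃! ξ : Kernel (X 0) (Π i : ℕ, X (i + 1)),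
      IsMarkovKernel ξ ∧
        ∀ n : ℕ, 1 ≤ n →
          ξ.map (fun (f : Π i : ℕ, X (i + 1)) (i : Fin n) ↦ f i) = iteratedCompProd κ n := by
  refine ⟨IonescuTulcea.trajKernel κ, ⟨inferInstance,
    fun n _ ↦ IonescuTulcea.trajKernel_map_restrict κ n⟩, ?_⟩
  rintro ξ ⟨hξ, hmarg⟩
  ext x : 1
  refine Measure.ext_of_map_restrict_fin (eventually_atTop.2 ⟨1, fun n hn ↦ ?_⟩)
  rw [← Kernel.map_apply _ (by fun_prop), ← Kernel.map_apply _ (by fun_prop), hmarg n hn,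
    IonescuTulcea.trajKernel_map_restrict]
end

section
/- Let $\mathcal{X}, \mathcal{Y}, \mathcal{Z}$ be measurable spaces where $\mathcal{Z}$ is a standard Borel space, and suppose either $\mathcal{X}$ is countable or the $\sigma$-algebra of $\mathcal{Y}$ is countably generated. Then every finite kernel $\kappa : \mathcal{X} \rightsquigarrow \mathcal{Y} \times \mathcal{Z}$ admits a disintegration: there exists a Markov kernel $\eta : \mathcal{X} \times \mathcal{Y} \rightsquigarrow \mathcal{Z}$ such that $\kappa = \kappa_{\mathrm{fst}} \otimes_k \eta$, where $\kappa_{\mathrm{fst}}$ is the composition of $\kappa$ with the first-coordinate projection. -/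
open MeasureTheory ProbabilityTheory
open scoped ENNReal

/-- **Disintegration of finite kernels.** If `𝓩` is a standard Borel space and either `𝓧` is
countable or the σ-algebra of `𝓨` is countably generated, then every finite kernel
`κ : 𝓧 ↝ 𝓨 × 𝓩` admits a disintegration: there is a Markov kernel `η : 𝓧 × 𝓨 ↝ 𝓩` with
`κ.fst ⊗ₖ η = κ`. -/
theorem kernel_disintegration
    {𝓧 𝓨 𝓩 : Type*} [MeasurableSpace 𝓧] [MeasurableSpace 𝓨] [MeasurableSpace 𝓩]
    [StandardBorelSpace 𝓩] [Nonempty 𝓩]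
    (h : Countable 𝓧 ∨ MeasurableSpace.CountablyGenerated 𝓨)
    (κ : Kernel 𝓧 (𝓨 × 𝓩)) [IsFiniteKernel κ] :
    ∃ η : Kernel (𝓧 × 𝓨) 𝓩, IsMarkovKernel η ∧ κ.fst ⊗ₖ η = κ := by
  have : MeasurableSpace.CountableOrCountablyGenerated 𝓧 𝓨 := ⟨h⟩
  exact ⟨κ.condKernel, inferInstance, κ.disintegrate κ.condKernel⟩
end

section
/- Suppose either $\mathcal{X}$ is countable or the $\sigma$-algebra of $\mathcal{Y}$ is countably generated. Let $\kappa, \eta : \mathcal{X} \rightsquigarrow \mathcal{Y}$ be finite kernels. Then there exists a jointly measurable function $\frac{d\kappa}{d\eta} : \mathcal{X} \times \mathcal{Y} \to \mathbb{R}_{+,\infty}$ and a finite kernel $\kappa_{\perp\eta} : \mathcal{X} \rightsquigarrow \mathcal{Y}$ such that for every $x \in \mathcal{X}$, the measure $\kappa_{\perp\eta}(x)$ is mutually singular with respect to $\eta(x)$, and $\kappa = \frac{d\kappa}{d\eta} \cdot \eta + \kappa_{\perp\eta}$. (Radon-Nikodym theorem for kernels.) -/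
open MeasureTheory ProbabilityTheory
open scoped ENNReal MeasureTheory

/-- **Radon-Nikodym theorem for kernels.** Suppose either `𝓧` is countable or the σ-algebra of
`𝓨` is countably generated. Let `κ, η : 𝓧 ↝ 𝓨` be finite kernels. Then there exists a jointly
measurable function `d : 𝓧 × 𝓨 → ℝ≥0∞` and a finite kernel `ξ : 𝓧 ↝ 𝓨` such that `ξ x` is
mutually singular with respect to `η x` for every `x`, and `κ = d • η + ξ`. -/
theorem kernel_radonNikodym
    {𝓧 𝓨 : Type*} [MeasurableSpace 𝓧] [MeasurableSpace 𝓨]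
    (h : Countable 𝓧 ∨ MeasurableSpace.CountablyGenerated 𝓨)
    (κ η : Kernel 𝓧 𝓨) [IsFiniteKernel κ] [IsFiniteKernel η] :
    ∃ (d : 𝓧 × 𝓨 → ℝ≥0∞) (ξ : Kernel 𝓧 𝓨), Measurable d ∧ IsFiniteKernel ξ ∧
      (∀ x, ξ x ⟂ₘ η x) ∧
      κ = Kernel.withDensity η (fun x y ↦ d (x, y)) + ξ := by
  have : MeasurableSpace.CountableOrCountablyGenerated 𝓧 𝓨 := ⟨h⟩
  refine ⟨fun p ↦ Kernel.rnDeriv κ η p.1 p.2, Kernel.singularPart κ η,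
    Kernel.measurable_rnDeriv κ η, inferInstance,
    fun x ↦ Kernel.mutuallySingular_singularPart κ η x, ?_⟩
  exact (Kernel.rnDeriv_add_singularPart κ η).symm
end

section
/- Let $\kappa : \mathcal{X} \rightsquigarrow \mathcal{Y} \times \mathcal{Z}$ and $\nu : \mathcal{X} \rightsquigarrow \mathcal{Y}$ be finite kernels with $\kappa_{\mathrm{fst}} \le \nu$, where the $\sigma$-algebra of $\mathcal{Y}$ is countably generated. Then there exists a function $d_{\kappa,\nu} : \mathcal{X} \times \mathcal{Y} \to \mathcal{P}(\mathcal{Z}) \to \mathbb{R}$ such that for every measurable set $C$ of $\mathcal{Z}$ the map $(x,y) \mapsto d_{\kappa,\nu}(x,y)(C)$ is jointly measurable on $\mathcal{X} \times \mathcal{Y}$, and for all $x \in \mathcal{X}$ and all measurable sets $B \subseteq \mathcal{Y}$ and $C \subseteq \mathcal{Z}$, $\int_{y \in B} d_{\kappa,\nu}(x,y)(C) \, d\nu(x) = \kappa(x)(B \times C)$. (Existence of densities for finite kernels.) -/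
open MeasureTheory ProbabilityTheory
open scoped ENNReal

/-- **Existence of densities for finite kernels.** Let `κ : 𝓧 ↝ 𝓨 × 𝓩` and `ν : 𝓧 ↝ 𝓨` be
finite kernels with `κ.fst ≤ ν`, where the σ-algebra of `𝓨` is countably generated. Then there
exists a function `d : 𝓧 × 𝓨 → Set 𝓩 → ℝ` such that for every measurable set `C` of `𝓩` the map
`(x, y) ↦ d (x, y) C` is jointly measurable, and for all `x` and all measurable sets `B ⊆ 𝓨` and
`C ⊆ 𝓩`, `∫ y in B, d (x, y) C ∂(ν x) = κ x (B ×ˢ C)`. -/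
theorem kernel_density_exists
    {𝓧 𝓨 𝓩 : Type*} [MeasurableSpace 𝓧] [MeasurableSpace 𝓨] [MeasurableSpace 𝓩]
    [MeasurableSpace.CountablyGenerated 𝓨]
    (κ : Kernel 𝓧 (𝓨 × 𝓩)) (ν : Kernel 𝓧 𝓨) [IsFiniteKernel κ] [IsFiniteKernel ν]
    (hκν : κ.fst ≤ ν) :
    ∃ d : 𝓧 × 𝓨 → Set 𝓩 → ℝ,
      (∀ C : Set 𝓩, MeasurableSet C → Measurable (fun p ↦ d p C)) ∧
      ∀ (x : 𝓧) (B : Set 𝓨) (C : Set 𝓩), MeasurableSet B → MeasurableSet C →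
        ∫ y in B, d (x, y) C ∂(ν x) = (κ x (B ×ˢ C)).toReal := by
  refine ⟨fun p C ↦ κ.density ν p.1 p.2 C, fun C hC ↦ Kernel.measurable_density κ ν hC,
    fun x B C hB hC ↦ Kernel.setIntegral_density hκν x hC hB⟩
end

section
/- Let $\kappa, \eta : \mathcal{X} \rightsquigarrow \mathcal{Y}$ be finite kernels with $\kappa \le \eta$, where the $\sigma$-algebra of $\mathcal{Y}$ is countably generated. Then there exists a jointly measurable function $d_{\kappa,\eta} : \mathcal{X} \times \mathcal{Y} \to \mathbb{R}$ such that for all $x \in \mathcal{X}$ and all measurable sets $B \subseteq \mathcal{Y}$, $\int_{y \in B} d_{\kappa,\eta}(x,y) \, d\eta(x) = \kappa(x)(B)$. -/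
open MeasureTheory ProbabilityTheory
open scoped ENNReal

/-! Mathlib's `Kernel.density κ η a y s` is a jointly measurable density, against `η`, of a
kernel `κ` into a product `𝓨 × β` whose first marginal is bounded by `η`; it is built by
martingale convergence along a countable filtration of `𝓨`. Viewed as a kernel into `𝓨 × Unit`,
`κ` has first marginal `κ ≤ η`, and its density at the set `univ` is the function sought. -/

namespace ProbabilityTheory.Kernel

variable {α β : Type*} {mα : MeasurableSpace α} {mβ : MeasurableSpace β}
  [MeasurableSpace.CountablyGenerated β]

noncomputable def densityOfLE (κ η : Kernel α β) (p : α × β) : ℝ :=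
  density (κ.map fun y ↦ (y, ())) η p.1 p.2 Set.univ

lemma measurable_densityOfLE (κ η : Kernel α β) : Measurable (densityOfLE κ η) :=
  measurable_density _ η .univ

lemma setIntegral_densityOfLE {κ η : Kernel α β} [IsFiniteKernel η] (hκη : κ ≤ η) (a : α)
    {B : Set β} (hB : MeasurableSet B) :
    ∫ y in B, densityOfLE κ η (a, y) ∂(η a) = (κ a).real B := by
  have hmk : Measurable fun y : β ↦ (y, ()) := measurable_id.prodMk measurable_const
  have hfst : fst (κ.map fun y ↦ (y, ())) ≤ η := by
    rwa [fst_map_id_prod κ measurable_const]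
  simp only [densityOfLE]
  rw [setIntegral_density hfst a .univ hB, measureReal_def, measureReal_def,
    map_apply' _ hmk _ (hB.prod .univ)]
  simp

end ProbabilityTheory.Kernel

theorem kernel_density_exists_of_le_general
    {𝓧 𝓨 : Type*} [MeasurableSpace 𝓧] [MeasurableSpace 𝓨]
    [MeasurableSpace.CountablyGenerated 𝓨]
    (κ η : Kernel 𝓧 𝓨) [IsFiniteKernel η]
    (hκη : κ ≤ η) :
    ∃ d : 𝓧 × 𝓨 → ℝ, Measurable d ∧
      ∀ (x : 𝓧) (B : Set 𝓨), MeasurableSet B →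
        ∫ y in B, d (x, y) ∂(η x) = (κ x B).toReal :=
  ⟨Kernel.densityOfLE κ η, Kernel.measurable_densityOfLE κ η,
    fun x _ hB ↦ Kernel.setIntegral_densityOfLE hκη x hB⟩

/-- Let `κ, η : 𝓧 ↝ 𝓨` be finite kernels with `κ ≤ η`, where the σ-algebra of `𝓨` is countably
generated. Then there exists a jointly measurable function `d : 𝓧 × 𝓨 → ℝ` such that for all
`x` and all measurable sets `B ⊆ 𝓨`, `∫ y in B, d (x, y) ∂(η x) = κ x B`. -/
theorem kernel_density_exists_of_le
    {𝓧 𝓨 : Type*} [MeasurableSpace 𝓧] [MeasurableSpace 𝓨]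
    [MeasurableSpace.CountablyGenerated 𝓨]
    (κ η : Kernel 𝓧 𝓨) [IsFiniteKernel κ] [IsFiniteKernel η]
    (hκη : κ ≤ η) :
    ∃ d : 𝓧 × 𝓨 → ℝ, Measurable d ∧
      ∀ (x : 𝓧) (B : Set 𝓨), MeasurableSet B →
        ∫ y in B, d (x, y) ∂(η x) = (κ x B).toReal :=
  kernel_density_exists_of_le_general κ η hκη
end

section
/- Let $(\Omega, P)$ be a probability space, $\mathcal{X}, \mathcal{Y}$ standard Borel spaces, $\mathcal{Z}$ a measurable space, and let $X : \Omega \to \mathcal{X}$, $Y : \Omega \to \mathcal{Y}$, $Z : \Omega \to \mathcal{Z}$ be measurable. Then $Y$ and $X$ are conditionally independent given the $\sigma$-algebra generated by $Z$ if and only if the conditional distribution of $X$ given the pair $(Z, Y)$ is, for $(Z,Y)_*P$-almost every $(z,y)$, equal to the conditional distribution of $X$ given $Z$ evaluated at $z$ (i.e. $\mathrm{condDistrib}(X, (Z,Y), P)$ agrees $(Z,Y)_*P$-a.e. with the kernel obtained from $\mathrm{condDistrib}(X, Z, P)$ by ignoring the second argument). -/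
open MeasureTheory ProbabilityTheory
open scoped ENNReal

/-- Two random variables `Y` and `X` on a probability space `(Ω, P)` are conditionally
independent given the σ-algebra generated by `Z` if and only if the conditional distribution of
`X` given the pair `(Z, Y)` agrees, `(Z, Y)_* P`-almost everywhere, with the conditional
distribution of `X` given `Z` (seen as a kernel on `𝓩 × 𝓨` ignoring the second argument). -/
theorem condIndepFun_iff_condDistrib_prod_ae_eq_prodMkRight
    {Ω 𝓧 𝓨 𝓩 : Type*} [MeasurableSpace Ω] [StandardBorelSpace Ω]
    [MeasurableSpace 𝓧] [StandardBorelSpace 𝓧] [Nonempty 𝓧]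
    [MeasurableSpace 𝓨] [StandardBorelSpace 𝓨] [Nonempty 𝓨]
    [MeasurableSpace 𝓩]
    (P : Measure Ω) [IsProbabilityMeasure P]
    {X : Ω → 𝓧} {Y : Ω → 𝓨} {Z : Ω → 𝓩}
    (hX : Measurable X) (hY : Measurable Y) (hZ : Measurable Z) :
    CondIndepFun (MeasurableSpace.comap Z inferInstance) hZ.comap_le Y X P ↔
      condDistrib X (fun ω ↦ (Z ω, Y ω)) P
        =ᵐ[P.map (fun ω ↦ (Z ω, Y ω))] Kernel.prodMkRight 𝓨 (condDistrib X Z P) :=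
  ProbabilityTheory.condIndepFun_iff_condDistrib_prod_ae_eq_prodMkRight hX hY hZ
end

section
/- Let $\mu, \nu$ be probability measures on a measurable space $\mathcal{X}$ and let $\kappa, \eta : \mathcal{X} \rightsquigarrow \mathcal{Y}$ be finite kernels (with appropriate measurability of the Radon-Nikodym derivatives, e.g. $\mathcal{Y}$ has countably generated $\sigma$-algebra). Then the Kullback-Leibler divergence satisfies the chain rule $\mathrm{KL}(\mu \otimes_m \kappa, \nu \otimes_m \eta) = \mathrm{KL}(\mu, \nu) + \mathrm{KL}(\mu \otimes_m \kappa, \mu \otimes_m \eta)$, where $\kappa$ and $\eta$ are Markov kernels. -/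
open MeasureTheory ProbabilityTheory
open scoped ENNReal Classical

/-- Kullback-Leibler divergence between two measures: `KL(μ, ν) = ∫ log (dμ/dν) dμ` (a value in
`ℝ≥0∞`) if `μ` is absolutely continuous with respect to `ν` (and the integral is well defined),
and `∞` otherwise. -/
noncomputable def klDiv {𝓧 : Type*} [MeasurableSpace 𝓧] (μ ν : Measure 𝓧) : ℝ≥0∞ :=
  if μ ≪ ν ∧ Integrable (fun x ↦ Real.log (μ.rnDeriv ν x).toReal) μ then
    ENNReal.ofReal (∫ x, Real.log (μ.rnDeriv ν x).toReal ∂μ)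
  else ∞

/- Mathlib's `InformationTheory.klDiv` adds the correction `ν.real univ - μ.real univ` inside
`ENNReal.ofReal`; it vanishes when the two measures have the same total mass. -/
lemma klDiv_eq_informationTheory_klDiv {𝓧 : Type*} [MeasurableSpace 𝓧] {μ ν : Measure 𝓧}
    (h : μ Set.univ = ν Set.univ) : klDiv μ ν = InformationTheory.klDiv μ ν := by
  rw [InformationTheory.klDiv_def, measureReal_def, measureReal_def, h, add_sub_cancel_right]
  rfl

theorem klDiv_compProd_chain_rule_general
    {𝓧 𝓨 : Type*} [MeasurableSpace 𝓧] [MeasurableSpace 𝓨]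
    (μ ν : Measure 𝓧) [IsProbabilityMeasure μ] [IsProbabilityMeasure ν]
    (κ η : Kernel 𝓧 𝓨) [IsMarkovKernel κ] [IsMarkovKernel η] :
    klDiv (μ ⊗ₘ κ) (ν ⊗ₘ η) = klDiv μ ν + klDiv (μ ⊗ₘ κ) (μ ⊗ₘ η) := by
  rw [klDiv_eq_informationTheory_klDiv (by simp), klDiv_eq_informationTheory_klDiv (by simp),
    klDiv_eq_informationTheory_klDiv (by simp)]
  exact InformationTheory.klDiv_compProd_eq_add μ ν κ η

/-- **Chain rule for the Kullback-Leibler divergence.** For probability measures `μ, ν` on `𝓧`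
and Markov kernels `κ, η : 𝓧 ↝ 𝓨` (with `𝓨` countably generated so that kernel Radon-Nikodym
derivatives are measurable), `KL(μ ⊗ₘ κ, ν ⊗ₘ η) = KL(μ, ν) + KL(μ ⊗ₘ κ, μ ⊗ₘ η)`. -/
theorem klDiv_compProd_chain_rule
    {𝓧 𝓨 : Type*} [MeasurableSpace 𝓧] [MeasurableSpace 𝓨]
    [MeasurableSpace.CountablyGenerated 𝓨]
    (μ ν : Measure 𝓧) [IsProbabilityMeasure μ] [IsProbabilityMeasure ν]
    (κ η : Kernel 𝓧 𝓨) [IsMarkovKernel κ] [IsMarkovKernel η] :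
    klDiv (μ ⊗ₘ κ) (ν ⊗ₘ η) = klDiv μ ν + klDiv (μ ⊗ₘ κ) (μ ⊗ₘ η) :=
  klDiv_compProd_chain_rule_general μ ν κ η
end

section
/- Let $\mu$ be a probability measure on a measurable space $\mathcal{X}$, let $\mathcal{Y}$ be a standard Borel space, and let $\kappa, \eta : \mathcal{X} \rightsquigarrow \mathcal{Y}$ be Markov kernels. Then conditioning increases the Kullback-Leibler divergence: $\mathrm{KL}(\kappa \circ_m \mu, \eta \circ_m \mu) \le \mathrm{KL}(\mu \otimes_m \kappa, \mu \otimes_m \eta)$. -/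
open MeasureTheory ProbabilityTheory
open scoped ENNReal Classical

theorem klDiv_comp_le_compProd_general
    {𝓧 𝓨 : Type*} [MeasurableSpace 𝓧] [MeasurableSpace 𝓨]
    (μ : Measure 𝓧) [IsProbabilityMeasure μ]
    (κ η : Kernel 𝓧 𝓨) [IsMarkovKernel κ] [IsMarkovKernel η] :
    klDiv (μ.bind κ) (μ.bind η) ≤ klDiv (μ ⊗ₘ κ) (μ ⊗ₘ η) := by
  calc klDiv (μ.bind κ) (μ.bind η)
      = InformationTheory.klDiv (μ ⊗ₘ κ).snd (μ ⊗ₘ η).snd := by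
        rw [klDiv_eq_informationTheory_klDiv (by simp), Measure.snd_compProd,
          Measure.snd_compProd]
    _ ≤ InformationTheory.klDiv (μ ⊗ₘ κ) (μ ⊗ₘ η) :=
        InformationTheory.klDiv_map_le _ _ measurable_snd
    _ = klDiv (μ ⊗ₘ κ) (μ ⊗ₘ η) := (klDiv_eq_informationTheory_klDiv (by simp)).symm

/-- **Conditioning increases the Kullback-Leibler divergence.** For a probability measure `μ`
on `𝓧`, a standard Borel space `𝓨` and Markov kernels `κ, η : 𝓧 ↝ 𝓨`,
`KL(κ ∘ₘ μ, η ∘ₘ μ) ≤ KL(μ ⊗ₘ κ, μ ⊗ₘ η)`, where `κ ∘ₘ μ = μ.bind κ`. -/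
theorem klDiv_comp_le_compProd
    {𝓧 𝓨 : Type*} [MeasurableSpace 𝓧] [MeasurableSpace 𝓨]
    [StandardBorelSpace 𝓨] [Nonempty 𝓨]
    (μ : Measure 𝓧) [IsProbabilityMeasure μ]
    (κ η : Kernel 𝓧 𝓨) [IsMarkovKernel κ] [IsMarkovKernel η] :
    klDiv (μ.bind κ) (μ.bind η) ≤ klDiv (μ ⊗ₘ κ) (μ ⊗ₘ η) :=
  klDiv_comp_le_compProd_general μ κ η
end
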